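/- Let f: ℝ^d → ℝ be twice continuously differentiable with l-Lipschitz gradient and γ-Lipschitz Hessian in spectral norm. Let x* satisfy ∇f(x*) = 0, β > 0, ∇²f(x*) + βI invertible, K* = (∇²f(x*) + βI)⁻¹, η = ‖K*‖, μ > 1. Suppose x(1) = x(0) − K(0)∇f(x(0)) and the initial condition (ηγ/2)‖x(0) − x*‖ + l‖K(0) − K*‖ + ηβ ≤ 1/(2μ) holds. Then ‖x(1) − x*‖ ≤ (1/(2μ))‖x(0) − x*‖. -/

import Mathlib

/-! Since `K* (∇²f(x*) + β) = 1` and `∇f(x*) = 0`, with `v = x(0) - x*` and `g = ∇f(x(0))`,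
`x(1) - x* = K* (∇²f(x*) v - g) + β K* v - (K(0) - K*) g`.
The first term is a first-order Taylor remainder of `∇f` at `x*`, at most `(γ/2)‖v‖²` because the
Hessian is `γ`-Lipschitz; the last is at most `l ‖K(0) - K*‖ ‖v‖` because `∇f` is `l`-Lipschitz. -/

/-- The spectral norm (matrix norm induced by the Euclidean 2-norm) of a real matrix. -/
noncomputable def sNorm {d : ℕ} (M : Matrix (Fin d) (Fin d) ℝ) : ℝ :=
  ‖(Matrix.toEuclideanCLM (𝕜 := ℝ) M : EuclideanSpace ℝ (Fin d) →L[ℝ] EuclideanSpace ℝ (Fin d))‖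

/-- The action of a real matrix on a Euclidean vector. -/
noncomputable def mApply {d : ℕ} (M : Matrix (Fin d) (Fin d) ℝ)
    (v : EuclideanSpace ℝ (Fin d)) : EuclideanSpace ℝ (Fin d) :=
  Matrix.toEuclideanCLM (𝕜 := ℝ) M v

/-- The largest eigenvalue of a (symmetric) real matrix, as the supremum of its real spectrum. -/
noncomputable def lamMax {d : ℕ} (M : Matrix (Fin d) (Fin d) ℝ) : ℝ := sSup (spectrum ℝ M)

/-- The smallest eigenvalue of a (symmetric) real matrix, as the infimum of its real spectrum. -/
noncomputable def lamMin {d : ℕ} (M : Matrix (Fin d) (Fin d) ℝ) : ℝ := sInf (spectrum ℝ M)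

open Set

section
variable {E F : Type*} [NormedAddCommGroup E] [NormedSpace ℝ E] [NormedAddCommGroup F]
  [NormedSpace ℝ F]

/- Comparison with `B t = γ/2 ‖b - a‖² t²` of the first-order Taylor remainder along
`t ↦ a + t • (b - a)`, whose derivative grows at most like `γ ‖b - a‖² t`. -/
theorem norm_image_sub_sub_fderiv_le_of_lipschitz_fderiv {g : E → F} {g' : E → E →L[ℝ] F}
    {γ : ℝ} (hg : ∀ x, HasFDerivAt g (g' x) x) (hg' : ∀ x y, ‖g' x - g' y‖ ≤ γ * ‖x - y‖)
    (a b : E) : ‖g b - g a - g' a (b - a)‖ ≤ γ / 2 * ‖b - a‖ ^ 2 := by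
  set v := b - a
  have hremainder : ∀ t : ℝ, HasDerivAt (fun t : ℝ => g (a + t • v) - g a - t • g' a v)
      (g' (a + t • v) v - g' a v) t := fun t => by
    have hline : HasDerivAt (fun t : ℝ => a + t • v) v t := by
      simpa using ((hasDerivAt_id t).smul_const v).const_add a
    refine ((((hg _).comp_hasDerivAt t hline).sub_const (g a)).sub
      ((hasDerivAt_id t).smul_const (g' a v))).congr_deriv ?_
    simp
  have hB : ∀ t : ℝ, HasDerivAt (fun t : ℝ => γ / 2 * ‖v‖ ^ 2 * t ^ 2) (γ * ‖v‖ ^ 2 * t) t :=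
    fun t => ((hasDerivAt_pow 2 t).const_mul _).congr_deriv (by ring)
  have hbound : ∀ t ∈ Ico (0 : ℝ) 1, ‖g' (a + t • v) v - g' a v‖ ≤ γ * ‖v‖ ^ 2 * t := by
    rintro t ⟨ht, -⟩
    calc ‖g' (a + t • v) v - g' a v‖ = ‖(g' (a + t • v) - g' a) v‖ := rfl
      _ ≤ ‖g' (a + t • v) - g' a‖ * ‖v‖ := (g' (a + t • v) - g' a).le_opNorm v
      _ ≤ γ * ‖t • v‖ * ‖v‖ := by gcongr; simpa using hg' (a + t • v) a
      _ = γ * ‖v‖ ^ 2 * t := by rw [norm_smul, Real.norm_of_nonneg ht]; ring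
  simpa [v] using image_norm_le_of_norm_deriv_right_le_deriv_boundary
    (fun t _ => (hremainder t).continuousAt.continuousWithinAt)
    (fun t _ => (hremainder t).hasDerivWithinAt) (by simp) hB hbound
    (right_mem_Icc.2 zero_le_one)

theorem norm_sub_apply_le_of_comp_add_smul_eq_one {H Kstar K : E →L[ℝ] E} {β : ℝ} (hβ : 0 ≤ β)
    (hKstar : Kstar ∘L (H + β • 1) = 1) (v w : E) :
    ‖v - K w‖ ≤ ‖Kstar‖ * ‖H v - w‖ + ‖Kstar‖ * β * ‖v‖ + ‖K - Kstar‖ * ‖w‖ := by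
  have hv : Kstar (H v + β • v) = v := by simpa using DFunLike.congr_fun hKstar v
  have hdecomp : v - K w = Kstar (H v - w) + β • Kstar v - (K - Kstar) w := by
    conv_lhs => rw [← hv]
    simp only [map_sub, map_add, map_smul, FunLike.coe_sub, Pi.sub_apply]
    abel
  have hβKstar : ‖β • Kstar v‖ ≤ ‖Kstar‖ * β * ‖v‖ := by
    rw [norm_smul, Real.norm_of_nonneg hβ]
    linarith [mul_le_mul_of_nonneg_left (Kstar.le_opNorm v) hβ]
  rw [hdecomp]
  calc _ ≤ ‖Kstar (H v - w)‖ + ‖β • Kstar v‖ + ‖(K - Kstar) w‖ :=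
        (norm_sub_le _ _).trans (add_le_add_left (norm_add_le _ _) _)
    _ ≤ _ := by gcongr; exacts [Kstar.le_opNorm _, (K - Kstar).le_opNorm w]

theorem norm_sub_apply_sub_le_of_lipschitz {g : E → E} {g' : E → E →L[ℝ] E} {l γ β : ℝ}
    (hg : ∀ x, HasFDerivAt g (g' x) x) (hgLip : ∀ x y, ‖g x - g y‖ ≤ l * ‖x - y‖)
    (hg' : ∀ x y, ‖g' x - g' y‖ ≤ γ * ‖x - y‖) {xstar : E} (hroot : g xstar = 0) (hβ : 0 ≤ β)
    {Kstar K : E →L[ℝ] E} (hKstar : Kstar ∘L (g' xstar + β • 1) = 1) (x : E) :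
    ‖x - K (g x) - xstar‖ ≤
      (‖Kstar‖ * γ / 2 * ‖x - xstar‖ + l * ‖K - Kstar‖ + ‖Kstar‖ * β) * ‖x - xstar‖ := by
  have htaylor : ‖g' xstar (x - xstar) - g x‖ ≤ γ / 2 * ‖x - xstar‖ ^ 2 := by
    simpa [hroot, norm_sub_rev] using
      norm_image_sub_sub_fderiv_le_of_lipschitz_fderiv hg hg' xstar x
  have hgx : ‖g x‖ ≤ l * ‖x - xstar‖ := by simpa [hroot] using hgLip x xstar
  calc ‖x - K (g x) - xstar‖ = ‖(x - xstar) - K (g x)‖ := by rw [sub_right_comm]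
    _ ≤ _ := norm_sub_apply_le_of_comp_add_smul_eq_one hβ hKstar _ _
    _ ≤ ‖Kstar‖ * (γ / 2 * ‖x - xstar‖ ^ 2) + ‖Kstar‖ * β * ‖x - xstar‖ +
          ‖K - Kstar‖ * (l * ‖x - xstar‖) := by gcongr
    _ = _ := by ring

end

theorem ipg_base_case_general {d : ℕ}
    (f : EuclideanSpace ℝ (Fin d) → ℝ)
    (Hf : EuclideanSpace ℝ (Fin d) → Matrix (Fin d) (Fin d) ℝ)
    (hHf : ∀ x, HasFDerivAt (gradient f)
      (Matrix.toEuclideanCLM (𝕜 := ℝ) (Hf x) :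
        EuclideanSpace ℝ (Fin d) →L[ℝ] EuclideanSpace ℝ (Fin d)) x)
    (l γ : ℝ)
    (hgradLip : ∀ x y, ‖gradient f x - gradient f y‖ ≤ l * ‖x - y‖)
    (hhessLip : ∀ x y, sNorm (Hf x - Hf y) ≤ γ * ‖x - y‖)
    (xstar : EuclideanSpace ℝ (Fin d)) (hcrit : gradient f xstar = 0)
    (β : ℝ) (hβ : 0 < β) (hinv : IsUnit (Hf xstar + β • 1))
    (Kstar : Matrix (Fin d) (Fin d) ℝ) (hKstar : Kstar = (Hf xstar + β • 1)⁻¹)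
    (η : ℝ) (hη : η = sNorm Kstar) (μ : ℝ)
    (x0 x1 : EuclideanSpace ℝ (Fin d)) (K0 : Matrix (Fin d) (Fin d) ℝ)
    (hup : x1 = x0 - mApply K0 (gradient f x0))
    (hinit : η * γ / 2 * ‖x0 - xstar‖ + l * sNorm (K0 - Kstar) + η * β ≤ 1 / (2 * μ)) :
    ‖x1 - xstar‖ ≤ 1 / (2 * μ) * ‖x0 - xstar‖ := by
  have hinvMul : Kstar * (Hf xstar + β • 1) = 1 :=
    hKstar ▸ Matrix.nonsing_inv_mul _ ((Matrix.isUnit_iff_isUnit_det _).mp hinv)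
  have hKstarCLM : Matrix.toEuclideanCLM (𝕜 := ℝ) Kstar ∘L
      (Matrix.toEuclideanCLM (𝕜 := ℝ) (Hf xstar) + β • 1) = 1 := by
    have h := congrArg (Matrix.toEuclideanCLM (𝕜 := ℝ)) hinvMul
    rwa [map_mul, map_add, map_smul, map_one] at h
  have hHfLip : ∀ x y, ‖Matrix.toEuclideanCLM (𝕜 := ℝ) (Hf x) -
      Matrix.toEuclideanCLM (𝕜 := ℝ) (Hf y)‖ ≤ γ * ‖x - y‖ := fun x y => by
    rw [← map_sub]; exact hhessLip x y
  rw [hη, sNorm, sNorm, map_sub] at hinit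
  subst hup
  calc _ ≤ _ := norm_sub_apply_sub_le_of_lipschitz hHf hgradLip hHfLip hcrit hβ.le hKstarCLM x0
    _ ≤ 1 / (2 * μ) * ‖x0 - xstar‖ := mul_le_mul_of_nonneg_right hinit (norm_nonneg _)

/-- Base case of the induction in Theorem 1: under the initial condition
`(ηγ/2)‖x(0) - x*‖ + l‖K(0) - K*‖ + ηβ ≤ 1/(2μ)`, the first IPG step satisfies
`‖x(1) - x*‖ ≤ (1/(2μ))‖x(0) - x*‖`. -/
theorem ipg_base_case {d : ℕ}
    (f : EuclideanSpace ℝ (Fin d) → ℝ)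
    (Hf : EuclideanSpace ℝ (Fin d) → Matrix (Fin d) (Fin d) ℝ)
    (hf : ContDiff ℝ 2 f)
    (hHf : ∀ x, HasFDerivAt (gradient f)
      (Matrix.toEuclideanCLM (𝕜 := ℝ) (Hf x) :
        EuclideanSpace ℝ (Fin d) →L[ℝ] EuclideanSpace ℝ (Fin d)) x)
    (l γ : ℝ)
    (hgradLip : ∀ x y, ‖gradient f x - gradient f y‖ ≤ l * ‖x - y‖)
    (hhessLip : ∀ x y, sNorm (Hf x - Hf y) ≤ γ * ‖x - y‖)
    (xstar : EuclideanSpace ℝ (Fin d)) (hcrit : gradient f xstar = 0)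
    (β : ℝ) (hβ : 0 < β) (hinv : IsUnit (Hf xstar + β • 1))
    (Kstar : Matrix (Fin d) (Fin d) ℝ) (hKstar : Kstar = (Hf xstar + β • 1)⁻¹)
    (η : ℝ) (hη : η = sNorm Kstar) (μ : ℝ) (hμ : 1 < μ)
    (x0 x1 : EuclideanSpace ℝ (Fin d)) (K0 : Matrix (Fin d) (Fin d) ℝ)
    (hup : x1 = x0 - mApply K0 (gradient f x0))
    (hinit : η * γ / 2 * ‖x0 - xstar‖ + l * sNorm (K0 - Kstar) + η * β ≤ 1 / (2 * μ)) :
    ‖x1 - xstar‖ ≤ 1 / (2 * μ) * ‖x0 - xstar‖ :=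
  ipg_base_case_general f Hf hHf l γ hgradLip hhessLip xstar hcrit β hβ hinv Kstar hKstar η hη μ x0
    x1 K0 hup hinit
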